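/- arXiv:2306.08556 — 6 statements merged into one kernel-verified Lean document; each statement's English description precedes it below -/
import Mathlib

section
/- Let V be a real vector space of dimension n(k+1), let ω¹,...,ω^k be alternating bilinear forms on V, and let W ⊂ V be a subspace of dimension nk such that ω^α(u,v) = 0 for all u,v ∈ W and all α, and ∩_{α=1}^k ker ω^α = {0}. Then each ker ω^α is contained in W. -/
/-!
Contraction with the forms, `w ↦ (ω^α(w, ·))_α`, sends the isotropic subspace `W` into `k` copies
of its annihilator `W⁰ ≅ (V/W)^*`. The common kernel being trivial, this map is injective, and since
`dim W = nk = k · dim (V/W)^*` it is an isomorphism. So every `φ ∈ W⁰` is `ω^α(w, ·)` for some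
`w ∈ W`, and for `u ∈ ker ω^α` skew-symmetry gives `φ u = -ω^α(u, w) = 0`; hence `u ∈ W`.
-/

open Module

namespace Submodule

variable {K V ι : Type*} [Field K] [AddCommGroup V] [Module K V]

theorem ker_le_of_dualAnnihilator_le_map {B : V →ₗ[K] Dual K V} (hskew : ∀ v w, B v w = -B w v)
    {W : Submodule K V} (hW : W.dualAnnihilator ≤ W.map B) : LinearMap.ker B ≤ W := by
  intro u hu
  rw [← Subspace.forall_mem_dualAnnihilator_apply_eq_zero_iff]
  intro φ hφ
  obtain ⟨w, -, rfl⟩ := hW hφ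
  rw [hskew, LinearMap.mem_ker.mp hu, LinearMap.zero_apply, neg_zero]

def contractionToDualQuot (ω : ι → V →ₗ[K] Dual K V) (W : Submodule K V)
    (hiso : ∀ i, ∀ u ∈ W, ∀ v ∈ W, ω i u v = 0) : W →ₗ[K] (ι → Dual K (V ⧸ W)) :=
  LinearMap.pi fun i => W.dualQuotEquivDualAnnihilator.symm.toLinearMap ∘ₗ
    ((ω i).domRestrict W).codRestrict W.dualAnnihilator fun w =>
      (mem_dualAnnihilator _).mpr (hiso i w w.2)

variable {ω : ι → V →ₗ[K] Dual K V} {W : Submodule K V}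
  {hiso : ∀ i, ∀ u ∈ W, ∀ v ∈ W, ω i u v = 0}

@[simp]
theorem contractionToDualQuot_apply_mk (w : W) (i : ι) (v : V) :
    contractionToDualQuot ω W hiso w i (Quotient.mk v) = ω i w v :=
  rfl

theorem contractionToDualQuot_injective (hker : ⨅ i, LinearMap.ker (ω i) = ⊥) :
    Function.Injective (contractionToDualQuot ω W hiso) := by
  intro w w' h
  have hmem : (w - w' : V) ∈ ⨅ i, LinearMap.ker (ω i) := by
    simp only [mem_iInf, LinearMap.mem_ker, map_sub, sub_eq_zero]
    intro i
    ext v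
    simpa using LinearMap.congr_fun (congrFun h i) (Quotient.mk v)
  rw [hker, mem_bot, sub_eq_zero] at hmem
  exact Subtype.ext hmem

theorem contractionToDualQuot_surjective [FiniteDimensional K V] [Fintype ι]
    (hker : ⨅ i, LinearMap.ker (ω i) = ⊥)
    (hdim : finrank K W = Fintype.card ι * finrank K (V ⧸ W)) :
    Function.Surjective (contractionToDualQuot ω W hiso) := by
  refine (LinearMap.injective_iff_surjective_of_finrank_eq_finrank ?_).mp
    (contractionToDualQuot_injective hker)
  rw [finrank_pi_fintype, Finset.sum_const, Finset.card_univ, smul_eq_mul,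
    Subspace.dual_finrank_eq, hdim]

theorem dualAnnihilator_le_map_of_surjective
    (hsurj : Function.Surjective (contractionToDualQuot ω W hiso)) (i : ι) :
    W.dualAnnihilator ≤ W.map (ω i) := by
  classical
  intro φ hφ
  obtain ⟨w, hw⟩ := hsurj (Pi.single i (W.dualQuotEquivDualAnnihilator.symm ⟨φ, hφ⟩))
  refine ⟨w, w.2, ?_⟩
  ext v
  have := LinearMap.congr_fun (congrFun hw i) (Quotient.mk v)
  rwa [Pi.single_eq_same] at this

end Submodule

open Submodule in
/-- In a `k`-symplectic vector space `(V, ω¹,…,ω^k, W)` with `dim V = n(k+1)`,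
`dim W = nk`, `ω^α|_{W×W} = 0` and trivial common kernel, each kernel
`ker ω^α` is contained in `W`. -/
theorem ksymplectic_ker_subset_polarisation
    (V : Type*) [AddCommGroup V] [Module ℝ V] [FiniteDimensional ℝ V]
    (n k : ℕ)
    (hdim : Module.finrank ℝ V = n * (k + 1))
    (ω : Fin k → V →ₗ[ℝ] Module.Dual ℝ V)
    (halt : ∀ (α : Fin k) (v w : V), ω α v w = - ω α w v)
    (W : Submodule ℝ V) (hW : Module.finrank ℝ ↥W = n * k)
    (hiso : ∀ α : Fin k, ∀ u ∈ W, ∀ v ∈ W, ω α u v = 0)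
    (hker : (⨅ α : Fin k, LinearMap.ker (ω α)) = ⊥) :
    ∀ α : Fin k, LinearMap.ker (ω α) ≤ W := by
  have hquot : finrank ℝ (V ⧸ W) = n := by
    have := W.finrank_quotient_add_finrank
    rw [hdim, hW] at this
    linarith
  have hsurj := contractionToDualQuot_surjective (hiso := hiso) hker
    (by rw [hW, hquot, Fintype.card_fin, mul_comm])
  exact fun α => ker_le_of_dualAnnihilator_le_map (halt α)
    (dualAnnihilator_le_map_of_surjective hsurj α)
end

section
/- Let V be a real vector space of dimension n(k+1) with k ≥ 2, let ω¹,...,ω^k be alternating bilinear forms on V, and W ⊂ V a subspace of dimension nk with ω^α|_{W×W} = 0 for all α and ∩_{α=1}^k ker ω^α = {0}. Define W_β = ∩_{α ≠ β} ker ω^α for β = 1,...,k. Then W = W_1 ⊕ ... ⊕ W_k and each W_β has dimension n. -/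
/-!
Isotropy of `W` makes `w ↦ ω^α(w, ·)` a functional on `V ⧸ W`, so `ρ : w ↦ (ω^α(w, ·))_α` maps
`W` into `(Dual (V ⧸ W))^k`. It is injective because the `ω^α` have no common kernel, hence an
isomorphism since both sides have dimension `nk`. Under `ρ`, `W ∩ W_β` is the `β`-th coordinate
axis, which gives the decomposition of `W` and `dim W_β = n`, once `W_β ⊆ W` is known. For that,
surjectivity of `w ↦ ω^α(w, ·)` onto `Dual (V ⧸ W)` and skew-symmetry show `ker ω^α ⊆ W`, and
`k ≥ 2` puts `W_β` inside some `ker ω^α`. Independence of the `W_β` is a lattice fact: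
`W_β ⊓ ⨆_{γ ≠ β} W_γ ≤ ⨅_α ker ω^α = ⊥`.
-/

open Module LinearMap Function

theorem iSupIndep_iInf_ne_of_iInf_eq_bot {α ι : Type*} [CompleteLattice α] {a : ι → α}
    (h : ⨅ i, a i = ⊥) : iSupIndep fun j => ⨅ (i) (_ : i ≠ j), a i := by
  intro j
  have hsup : ⨆ (l) (_ : l ≠ j), ⨅ (i) (_ : i ≠ l), a i ≤ a j :=
    iSup₂_le fun l hl => iInf_le_of_le j (iInf_le _ hl.symm)
  rw [disjoint_iff, eq_bot_iff, ← h, iInf_split_single a j, inf_comm]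
  exact inf_le_inf_right _ hsup

section Pi

variable {R M ι : Type*} {φ : ι → Type*} [Ring R] [AddCommGroup M] [Module R M]
  [∀ i, AddCommGroup (φ i)] [∀ i, Module R (φ i)] [DecidableEq ι]

theorem LinearMap.iInf_ker_proj_ne_eq_range_single (j : ι) :
    ⨅ (i) (_ : i ≠ j), ker (proj i : ((i : ι) → φ i) →ₗ[R] φ i)
      = range (single R φ j) := by
  simpa using (iSup_range_single_eq_iInf_ker_proj R φ (I := {j}) (J := {j}ᶜ) isCompl_compl
    (Set.finite_singleton j)).symm

theorem LinearMap.iInf_ker_ne_eq_comap_range_single (f : (i : ι) → M →ₗ[R] φ i) (j : ι) :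
    ⨅ (i) (_ : i ≠ j), ker (f i) = Submodule.comap (pi f) (range (single R φ j)) := by
  simp only [← iInf_ker_proj_ne_eq_range_single, Submodule.comap_iInf, ← ker_comp, proj_pi]

variable {f : (i : ι) → M →ₗ[R] φ i}

theorem LinearMap.iInf_ker_ne_eq_map_range_single (hf : Bijective (pi f)) (j : ι) :
    ⨅ (i) (_ : i ≠ j), ker (f i)
      = (range (single R φ j)).map ((LinearEquiv.ofBijective (pi f) hf).symm : _ →ₗ[R] M) := by
  rw [iInf_ker_ne_eq_comap_range_single, ← Submodule.comap_equiv_eq_map_symm]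
  rfl

theorem LinearMap.iSup_iInf_ker_ne_eq_top [Finite ι] (hf : Bijective (pi f)) :
    ⨆ j, ⨅ (i) (_ : i ≠ j), ker (f i) = ⊤ := by
  simp_rw [iInf_ker_ne_eq_map_range_single hf, ← Submodule.map_iSup, iSup_range_single,
    Submodule.map_top, LinearEquiv.range]

theorem LinearMap.finrank_iInf_ker_ne (hf : Bijective (pi f)) (j : ι) :
    finrank R ↥(⨅ (i) (_ : i ≠ j), ker (f i)) = finrank R (φ j) := by
  rw [iInf_ker_ne_eq_map_range_single hf, LinearEquiv.finrank_map_eq,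
    finrank_range_of_inj (Pi.single_injective j)]

end Pi

theorem Submodule.iSup_eq_of_iSup_comap_subtype_eq_top {R M ι : Type*} [Ring R]
    [AddCommGroup M] [Module R M] {W : Submodule R M} {T : ι → Submodule R M}
    (hT : ∀ i, T i ≤ W) (h : ⨆ i, (T i).comap W.subtype = ⊤) : ⨆ i, T i = W := by
  calc ⨆ i, T i = ⨆ i, ((T i).comap W.subtype).map W.subtype := by
        simp_rw [Submodule.map_comap_subtype, inf_of_le_right (hT _)]
    _ = W := by rw [← Submodule.map_iSup, h, Submodule.map_top, Submodule.range_subtype]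

section Isotropic

variable {K V : Type*} [Field K] [AddCommGroup V] [Module K V] {W : Submodule K V}

def LinearMap.dualQuot (b : V →ₗ[K] Dual K V) (hb : ∀ u ∈ W, ∀ v ∈ W, b u v = 0) :
    W →ₗ[K] Dual K (V ⧸ W) where
  toFun w := W.liftQ (b w) fun v hv => mem_ker.mpr (hb w w.2 v hv)
  map_add' _ _ := W.linearMap_qext (by ext; simp)
  map_smul' _ _ := W.linearMap_qext (by ext; simp)

variable {b : V →ₗ[K] Dual K V} {hb : ∀ u ∈ W, ∀ v ∈ W, b u v = 0}

@[simp]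
theorem LinearMap.dualQuot_apply_mk (w : W) (v : V) :
    b.dualQuot hb w (Submodule.Quotient.mk v) = b w v :=
  rfl

theorem LinearMap.ker_dualQuot : ker (b.dualQuot hb) = (ker b).comap W.subtype := by
  ext w
  simp only [mem_ker, Submodule.mem_comap, Submodule.subtype_apply]
  constructor
  · intro h
    ext v
    simpa using congrArg (· (Submodule.Quotient.mk v)) h
  · intro h
    exact W.linearMap_qext (by ext v; simp [h])

theorem LinearMap.ker_le_of_surjective_dualQuot (hskew : ∀ v w, b v w = -b w v)
    (hsurj : Surjective (b.dualQuot hb)) : ker b ≤ W := by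
  intro v hv
  rw [← W.ker_mkQ, mem_ker, ← Module.forall_dual_apply_eq_zero_iff K]
  intro φ
  obtain ⟨w, rfl⟩ := hsurj φ
  rw [Submodule.mkQ_apply, dualQuot_apply_mk, hskew, mem_ker.mp hv, zero_apply, neg_zero]

theorem LinearMap.injective_pi_dualQuot {ι : Type*} {ω : ι → V →ₗ[K] Dual K V}
    (hiso : ∀ i, ∀ u ∈ W, ∀ v ∈ W, ω i u v = 0) (hker : ⨅ i, ker (ω i) = ⊥) :
    Injective (pi fun i => (ω i).dualQuot (hiso i)) := by
  rw [← ker_eq_bot, ker_pi]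
  simp_rw [ker_dualQuot]
  rw [← Submodule.comap_iInf, hker, Submodule.comap_bot, Submodule.ker_subtype]

end Isotropic

/-- In a `k`-symplectic vector space with `k ≥ 2`, the subspaces
`W_β = ⋂_{α ≠ β} ker ω^α` yield a direct sum decomposition
`W = W_1 ⊕ ⋯ ⊕ W_k`, and each `W_β` has dimension `n`. -/
theorem ksymplectic_polarisation_decomposition
    (V : Type*) [AddCommGroup V] [Module ℝ V] [FiniteDimensional ℝ V]
    (n k : ℕ) (hk : 2 ≤ k)
    (hdim : Module.finrank ℝ V = n * (k + 1))
    (ω : Fin k → V →ₗ[ℝ] Module.Dual ℝ V)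
    (halt : ∀ (α : Fin k) (v w : V), ω α v w = - ω α w v)
    (W : Submodule ℝ V) (hW : Module.finrank ℝ ↥W = n * k)
    (hiso : ∀ α : Fin k, ∀ u ∈ W, ∀ v ∈ W, ω α u v = 0)
    (hker : (⨅ α : Fin k, LinearMap.ker (ω α)) = ⊥) :
    iSupIndep
        (fun β : Fin k => ⨅ (α : Fin k) (_ : α ≠ β), LinearMap.ker (ω α)) ∧
    (⨆ β : Fin k, ⨅ (α : Fin k) (_ : α ≠ β), LinearMap.ker (ω α)) = W ∧
    (∀ β : Fin k,
      Module.finrank ℝ ↥(⨅ (α : Fin k) (_ : α ≠ β), LinearMap.ker (ω α)) = n) := by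
  set f := fun α => (ω α).dualQuot (hiso α)
  have hdual : finrank ℝ (Dual ℝ (V ⧸ W)) = n := by
    have := W.finrank_quotient_add_finrank
    rw [hW, hdim] at this
    rw [Subspace.dual_finrank_eq]
    linarith
  have hbij : Bijective (pi f) := by
    have hinj : Injective (pi f) := injective_pi_dualQuot hiso hker
    have hrank : finrank ℝ W = finrank ℝ (Fin k → Dual ℝ (V ⧸ W)) := by
      simp [hW, Module.finrank_pi_fintype, hdual, mul_comm]
    exact ⟨hinj, (injective_iff_surjective_of_finrank_eq_finrank hrank).mp hinj⟩
  have hcomap : ∀ β, (⨅ (α) (_ : α ≠ β), ker (ω α)).comap W.subtype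
      = ⨅ (α) (_ : α ≠ β), ker (f α) := by
    simp only [Submodule.comap_iInf, f, ker_dualQuot, implies_true]
  have hle : ∀ β : Fin k, ⨅ (α) (_ : α ≠ β), ker (ω α) ≤ W := by
    have : Nontrivial (Fin k) := Fin.nontrivial_iff_two_le.mpr hk
    intro β
    obtain ⟨α, hαβ⟩ := exists_ne β
    refine (iInf₂_le α hαβ).trans (ker_le_of_surjective_dualQuot (hb := hiso α) (halt α) ?_)
    exact (surjective_eval α).comp hbij.2
  refine ⟨iSupIndep_iInf_ne_of_iInf_eq_bot hker, ?_, fun β => ?_⟩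
  · refine Submodule.iSup_eq_of_iSup_comap_subtype_eq_top hle ?_
    simpa only [hcomap] using iSup_iInf_ker_ne_eq_top hbij
  · rw [← (Submodule.comapSubtypeEquivOfLe (hle β)).finrank_eq, hcomap,
      finrank_iInf_ker_ne hbij, hdual]
end

section
/- Let V be a real vector space of dimension n(k+1), ω¹,...,ω^k alternating bilinear forms on V, and W ⊂ V a subspace of dimension nk with ω^α|_{W×W} = 0 for all α and ∩_{α=1}^k ker ω^α = {0}. Then there exists a basis {e^1,...,e^n, e^α_1,...,e^α_n (α=1,...,k)} of V* such that ω^α = Σ_{i=1}^n e^i ∧ e^α_i for each α, and W is the annihilator of span{e^1,...,e^n}. -/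
/-- Linear Darboux theorem for `k`-symplectic vector spaces: there is a basis
`{e^i, e^α_i}` of `V*` (indexed by `Fin n ⊕ Fin k × Fin n`) such that
`ω^α = ∑_i e^i ∧ e^α_i` and `W` is the annihilator of `span{e^1,…,e^n}`. -/
theorem linear_darboux_ksymplectic
    (V : Type*) [AddCommGroup V] [Module ℝ V] [FiniteDimensional ℝ V]
    (n k : ℕ)
    (hdim : Module.finrank ℝ V = n * (k + 1))
    (ω : Fin k → V →ₗ[ℝ] Module.Dual ℝ V)
    (halt : ∀ (α : Fin k) (v w : V), ω α v w = - ω α w v)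
    (W : Submodule ℝ V) (hW : Module.finrank ℝ ↥W = n * k)
    (hiso : ∀ α : Fin k, ∀ u ∈ W, ∀ v ∈ W, ω α u v = 0)
    (hker : (⨅ α : Fin k, LinearMap.ker (ω α)) = ⊥) :
    ∃ b : Module.Basis (Fin n ⊕ Fin k × Fin n) ℝ (Module.Dual ℝ V),
      (∀ (α : Fin k) (v w : V),
        ω α v w = ∑ i : Fin n,
          (b (Sum.inl i) v * b (Sum.inr (α, i)) w
            - b (Sum.inl i) w * b (Sum.inr (α, i)) v)) ∧
      W = ⨅ i : Fin n, LinearMap.ker (b (Sum.inl i)) := by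
  classical
  obtain ⟨C, hC⟩ := Submodule.exists_isCompl W
  have hCrank : Module.finrank ℝ C = n := by
    have := Submodule.finrank_add_eq_of_isCompl hC
    rw [hW, hdim] at this
    have h2 : n * (k + 1) = n * k + n := by ring
    omega
  let f0 : Module.Basis (Fin n) ℝ C := Module.finBasisOfFinrankEq ℝ C hCrank
  let f : Fin n → V := fun i => (f0 i : V)
  -- the map ψ
  let ψ : W →ₗ[ℝ] (Fin k × Fin n → ℝ) :=
    LinearMap.pi fun p => (LinearMap.applyₗ (f p.2)).comp ((ω p.1).comp W.subtype)
  have hψ : ∀ (x : W) (p : Fin k × Fin n), ψ x p = ω p.1 (x : V) (f p.2) := fun _ _ => rfl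
  have hψinj : Function.Injective ψ := by
    rw [← LinearMap.ker_eq_bot, eq_bot_iff]
    intro x hx
    have hx0 : ∀ p : Fin k × Fin n, ω p.1 (x : V) (f p.2) = 0 := by
      intro p; rw [← hψ]; simp [LinearMap.mem_ker.mp hx]
    have hmem : (x : V) ∈ ⨅ α : Fin k, LinearMap.ker (ω α) := by
      rw [Submodule.mem_iInf]
      intro α
      rw [LinearMap.mem_ker]
      have hC0 : (ω α (x : V)).comp C.subtype = 0 := by
        apply f0.ext; intro j
        exact hx0 (α, j)
      apply LinearMap.ext; intro v
      obtain ⟨a, ha, c, hc, rfl⟩ := Submodule.mem_sup.mp (hC.sup_eq_top ▸ Submodule.mem_top (x := v))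
      have h1 : ω α (x : V) a = 0 := hiso α x x.2 a ha
      have h2 : ω α (x : V) c = 0 := by
        have := LinearMap.congr_fun hC0 ⟨c, hc⟩; simpa using this
      simp [h1, h2]
    rw [hker] at hmem
    simpa using Subtype.ext (by simpa using hmem)
  have hrk : Module.finrank ℝ ↥W = Module.finrank ℝ (Fin k × Fin n → ℝ) := by
    rw [hW, Module.finrank_fintype_fun_eq_card, Fintype.card_prod, Fintype.card_fin,
      Fintype.card_fin, Nat.mul_comm]
  let e : W ≃ₗ[ℝ] (Fin k × Fin n → ℝ) := ψ.linearEquivOfInjective hψinj hrk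
  have he : ∀ x : W, e x = ψ x := fun x => ψ.linearEquivOfInjective_apply hψinj hrk x
  -- the w-vectors
  let wv : Fin k × Fin n → W := fun p => e.symm (-(Pi.single p 1))
  have hwv : ∀ (p q : Fin k × Fin n), ω q.1 (wv p : V) (f q.2) = -(if q = p then 1 else 0) := by
    intro p q
    rw [← hψ, ← he]
    simp [wv, Pi.single_apply]
  -- the correction vectors
  let u : Fin n → W := fun i => e.symm (fun p => -(ω p.1 (f i) (f p.2)) / 2)
  have hu : ∀ (i : Fin n) (p : Fin k × Fin n),
      ω p.1 (u i : V) (f p.2) = -(ω p.1 (f i) (f p.2)) / 2 := by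
    intro i p
    rw [← hψ, ← he]
    simp [u]
  let v : Fin n → V := fun i => f i + (u i : V)
  -- key evaluations
  have P1 : ∀ (α : Fin k) (i j : Fin n), ω α (v i) (v j) = 0 := by
    intro α i j
    have h1 : ω α (u i : V) (u j : V) = 0 := hiso α _ (u i).2 _ (u j).2
    have h2 : ω α (u i : V) (f j) = -(ω α (f i) (f j)) / 2 := hu i (α, j)
    have h3 : ω α (u j : V) (f i) = -(ω α (f j) (f i)) / 2 := hu j (α, i)
    have h4 : ω α (f i) ((u j : V)) = - ω α (u j : V) (f i) := halt α _ _
    have h5 : ω α (f j) (f i) = - ω α (f i) (f j) := halt α _ _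
    simp only [v, map_add, LinearMap.add_apply]
    rw [h1, h2, h4, h3, h5]
    ring
  have P2 : ∀ (α : Fin k) (i : Fin n) (p : Fin k × Fin n),
      ω α (v i) (wv p : V) = if p = (α, i) then 1 else 0 := by
    intro α i p
    have h1 : ω α (u i : V) (wv p : V) = 0 := hiso α _ (u i).2 _ (wv p).2
    have h2 : ω α (wv p : V) ((u i : V)) = 0 := hiso α _ (wv p).2 _ (u i).2
    have h3 := hwv p (α, i)
    have h4 : ω α (f i) ((wv p : V)) = - ω α (wv p : V) (f i) := halt α _ _
    have h3' : ω α (wv p : V) (f i) = -(if p = (α, i) then 1 else 0) := by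
      rw [h3]; exact congrArg Neg.neg (if_congr eq_comm rfl rfl)
    simp only [v, map_add, LinearMap.add_apply, h1, h4, h3', add_zero, neg_neg]
  have P3 : ∀ (α : Fin k) (p q : Fin k × Fin n), ω α (wv p : V) (wv q : V) = 0 :=
    fun α p q => hiso α _ (wv p).2 _ (wv q).2
  -- W is the span of the wv
  have hWspan : W = Submodule.span ℝ (Set.range fun p : Fin k × Fin n => (wv p : V)) := by
    let Bw : Module.Basis (Fin k × Fin n) ℝ W :=
      (((Pi.basisFun ℝ (Fin k × Fin n)).map e.symm).unitsSMul fun _ => -1)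
    have hBw : ∀ p, Bw p = wv p := by
      intro p
      simp only [Bw, Module.Basis.unitsSMul_apply, Module.Basis.map_apply, Pi.basisFun_apply, wv,
        map_neg, Units.smul_def, Units.val_neg, Units.val_one, neg_smul, one_smul]
    have : Submodule.span ℝ (Set.range Bw) = (⊤ : Submodule ℝ W) := Bw.span_eq
    have h2 : Submodule.map W.subtype (Submodule.span ℝ (Set.range Bw)) = W := by
      rw [this, Submodule.map_subtype_top]
    have himg : W.subtype '' Set.range Bw = Set.range fun p : Fin k × Fin n => (wv p : V) := by
      ext x
      simp only [Set.mem_image, Set.mem_range]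
      constructor
      · rintro ⟨y, ⟨p, rfl⟩, rfl⟩; exact ⟨p, by rw [hBw]; rfl⟩
      · rintro ⟨p, rfl⟩; exact ⟨Bw p, ⟨p, rfl⟩, by rw [hBw]; rfl⟩
    rw [Submodule.map_span, himg] at h2
    exact h2.symm
  -- the full basis of V
  let g : Fin n ⊕ Fin k × Fin n → V := Sum.elim v fun p => (wv p : V)
  have hspan : ⊤ ≤ Submodule.span ℝ (Set.range g) := by
    have hWle : W ≤ Submodule.span ℝ (Set.range g) := by
      rw [hWspan]
      apply Submodule.span_le.mpr
      rintro x ⟨p, rfl⟩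
      exact Submodule.subset_span ⟨Sum.inr p, rfl⟩
    have hCle : C ≤ Submodule.span ℝ (Set.range g) := by
      intro c hc
      have : c ∈ Submodule.span ℝ (Set.range f) := by
        have := f0.span_eq
        have h2 : Submodule.map C.subtype (Submodule.span ℝ (Set.range f0)) = C := by
          rw [this, Submodule.map_subtype_top]
        have himg : C.subtype '' Set.range f0 = Set.range f := by
          ext x
          simp only [Set.mem_image, Set.mem_range]
          constructor
          · rintro ⟨y, ⟨i, rfl⟩, rfl⟩; exact ⟨i, rfl⟩
          · rintro ⟨i, rfl⟩; exact ⟨f0 i, ⟨i, rfl⟩, rfl⟩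
        rw [Submodule.map_span, himg] at h2
        rw [← h2] at hc
        exact hc
      refine Submodule.span_le.mpr ?_ this
      rintro x ⟨i, rfl⟩
      have : f i = v i - (u i : V) := by simp [v]
      rw [this]
      exact sub_mem (Submodule.subset_span ⟨Sum.inl i, rfl⟩) (hWle (u i).2)
    rw [← hC.sup_eq_top]
    exact sup_le hWle hCle
  have hcard : Fintype.card (Fin n ⊕ Fin k × Fin n) = Module.finrank ℝ V := by
    simp [hdim]; ring
  let B : Module.Basis (Fin n ⊕ Fin k × Fin n) ℝ V := basisOfTopLeSpanOfCardEqFinrank g hspan hcard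
  have hB : ∀ p, B p = g p := fun p => congrFun (coe_basisOfTopLeSpanOfCardEqFinrank g hspan hcard) p
  let b : Module.Basis (Fin n ⊕ Fin k × Fin n) ℝ (Module.Dual ℝ V) := B.dualBasis
  have hself : ∀ r s, b r (B s) = if s = r then 1 else 0 := fun r s => B.dualBasis_apply_self r s
  refine ⟨b, ?_, ?_⟩
  · intro α vv ww
    have hL : ω α = ∑ i : Fin n,
        ((b (Sum.inl i)).smulRight (b (Sum.inr (α, i))) -
          (b (Sum.inr (α, i))).smulRight (b (Sum.inl i))) := by
      refine B.ext fun p => B.ext fun q => ?_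
      simp only [LinearMap.sum_apply, LinearMap.sub_apply, LinearMap.smulRight_apply,
        LinearMap.smul_apply, smul_eq_mul, hself]
      rcases p with i | p0 <;> rcases q with i' | q0
      · rw [hB, hB]
        simp only [g, Sum.elim_inl]
        rw [P1]
        simp
      · rw [hB, hB]
        simp only [g, Sum.elim_inl, Sum.elim_inr]
        rw [P2]
        rw [Finset.sum_eq_single i (fun x _ hx => by simp [(Ne.symm hx : i ≠ x)])
          (fun h => absurd (Finset.mem_univ i) h)]
        simp
      · rw [hB, hB]
        simp only [g, Sum.elim_inl, Sum.elim_inr]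
        rw [halt α _ (v i'), P2]
        rw [Finset.sum_eq_single i' (fun x _ hx => by simp [(Ne.symm hx : i' ≠ x)])
          (fun h => absurd (Finset.mem_univ i') h)]
        simp
      · rw [hB, hB]
        simp only [g, Sum.elim_inr]
        rw [P3]
        simp
    rw [hL]
    simp only [LinearMap.sum_apply, LinearMap.sub_apply, LinearMap.smulRight_apply,
      LinearMap.smul_apply, smul_eq_mul]
    exact Finset.sum_congr rfl fun i _ => by ring
  · apply le_antisymm
    · rw [hWspan]
      apply Submodule.span_le.mpr
      rintro x ⟨p, rfl⟩
      rw [SetLike.mem_coe, Submodule.mem_iInf]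
      intro i
      rw [LinearMap.mem_ker,
        show ((fun p : Fin k × Fin n => ((wv p : V))) p) = B (Sum.inr p) from (hB (Sum.inr p)).symm,
        hself]
      simp
    · intro x hx
      rw [Submodule.mem_iInf] at hx
      have hx' : ∀ i : Fin n, B.repr x (Sum.inl i) = 0 := by
        intro i
        have h := LinearMap.mem_ker.mp (hx i)
        rwa [show b (Sum.inl i) x = B.repr x (Sum.inl i) from B.dualBasis_apply _ _] at h
      have hsum := B.sum_repr x
      rw [Fintype.sum_sum_type] at hsum
      rw [← hsum]
      apply add_mem
      · apply Submodule.sum_mem; intro i _; rw [hx' i]; simp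
      · apply Submodule.sum_mem; intro p _
        exact Submodule.smul_mem _ _ (by rw [hB]; exact (wv p).2)
end

section
/- Let V be a real vector space of dimension n(k+1), ω¹,...,ω^k alternating bilinear forms with ∩_α ker ω^α = {0}, and W a subspace of dimension nk with ω^α|_{W×W} = 0 for all α. Then for each α the subspace ω^α(W) := {ω^α(w,·) : w ∈ W} ⊂ V* is contained in the annihilator W° of W, and has dimension exactly n. -/
/-- In a `k`-symplectic vector space, the image `ω^α(W) = {ω^α(w,·) : w ∈ W}`
is contained in the annihilator `W°` of `W` and has dimension exactly `n`. -/
theorem ksymplectic_image_in_annihilator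
    (V : Type*) [AddCommGroup V] [Module ℝ V] [FiniteDimensional ℝ V]
    (n k : ℕ)
    (hdim : Module.finrank ℝ V = n * (k + 1))
    (ω : Fin k → V →ₗ[ℝ] Module.Dual ℝ V)
    (halt : ∀ (α : Fin k) (v w : V), ω α v w = - ω α w v)
    (W : Submodule ℝ V) (hW : Module.finrank ℝ ↥W = n * k)
    (hiso : ∀ α : Fin k, ∀ u ∈ W, ∀ v ∈ W, ω α u v = 0)
    (hker : (⨅ α : Fin k, LinearMap.ker (ω α)) = ⊥) :
    ∀ α : Fin k,
      Submodule.map (ω α) W ≤ W.dualAnnihilator ∧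
      Module.finrank ℝ ↥(Submodule.map (ω α) W) = n := by
  -- containment in the annihilator, for every index
  have hle : ∀ α : Fin k, Submodule.map (ω α) W ≤ W.dualAnnihilator := by
    intro α φ hφ
    rcases hφ with ⟨w, hw, rfl⟩
    rw [Submodule.mem_dualAnnihilator]
    intro v hv
    exact hiso α w hw v hv
  -- the annihilator has dimension n
  have hann : Module.finrank ℝ ↥W.dualAnnihilator = n := by
    have h1 : Module.finrank ℝ (Module.Dual ℝ V ⧸ W.dualAnnihilator)
        + Module.finrank ℝ ↥W.dualAnnihilator = Module.finrank ℝ (Module.Dual ℝ V) :=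
      Submodule.finrank_quotient_add_finrank _
    have h2 : Module.finrank ℝ (Module.Dual ℝ V ⧸ W.dualAnnihilator)
        = Module.finrank ℝ (Module.Dual ℝ ↥W) :=
      (Subspace.quotAnnihilatorEquiv W).finrank_eq
    have h3 : Module.finrank ℝ (Module.Dual ℝ ↥W) = n * k := by
      rw [Subspace.dual_finrank_eq, hW]
    have h4 : Module.finrank ℝ (Module.Dual ℝ V) = n * (k + 1) := by
      rw [Subspace.dual_finrank_eq, hdim]
    rw [h2, h3, h4] at h1
    have h5 : n * (k + 1) = n * k + n := by ring
    omega
  -- each image has dimension at most n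
  have hle_n : ∀ α : Fin k, Module.finrank ℝ ↥(Submodule.map (ω α) W) ≤ n := by
    intro α
    have := Submodule.finrank_mono (hle α)
    omega
  -- the map W → Π α, ω α (W)
  let Φ : ↥W →ₗ[ℝ] (∀ α : Fin k, ↥(Submodule.map (ω α) W)) :=
    LinearMap.pi fun α =>
      LinearMap.codRestrict (Submodule.map (ω α) W) ((ω α).comp W.subtype)
        (fun w => Submodule.mem_map_of_mem w.2)
  have hΦ : Function.Injective Φ := by
    intro a b h
    have key : ∀ β : Fin k, ω β ((a : V) - b) = 0 := by
      intro β
      have hc : (ω β) (a : V) = (ω β) (b : V) :=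
        congrArg Subtype.val (congrFun h β)
      rw [map_sub, hc, sub_self]
    have hmem : ((a : V) - b) ∈ (⨅ β : Fin k, LinearMap.ker (ω β)) :=
      Submodule.mem_iInf _ |>.mpr fun β => LinearMap.mem_ker.mpr (key β)
    rw [hker, Submodule.mem_bot] at hmem
    exact Subtype.ext (sub_eq_zero.mp hmem)
  -- dimension count
  have hsum : n * k ≤ ∑ α : Fin k, Module.finrank ℝ ↥(Submodule.map (ω α) W) := by
    have h := LinearMap.finrank_le_finrank_of_injective hΦ
    haveI : ∀ i : Fin k, Module.Free ℝ ↥(Submodule.map (ω i) W) := fun i => Module.Free.of_divisionRing ℝ ↥(Submodule.map (ω i) W)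
    rwa [hW, Module.finrank_pi_fintype] at h
  intro α
  refine ⟨hle α, ?_⟩
  by_contra hne
  have hlt : Module.finrank ℝ ↥(Submodule.map (ω α) W) < n :=
    lt_of_le_of_ne (hle_n α) hne
  have : ∑ β : Fin k, Module.finrank ℝ ↥(Submodule.map (ω β) W)
      < ∑ _β : Fin k, n := by
    apply Finset.sum_lt_sum (fun β _ => hle_n β) ⟨α, Finset.mem_univ α, hlt⟩
  simp only [Finset.sum_const, Finset.card_univ, Fintype.card_fin, smul_eq_mul] at this
  have hcomm : k * n = n * k := Nat.mul_comm k n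
  omega
end

section
/- On the 3-dimensional manifold S = ℝ³ with coordinates (λ, y¹, y²), let ω¹ = dλ ∧ dy¹ and ω² = f_λ(λ,y¹) dλ ∧ dy¹ where f is smooth and ∂f/∂λ is nonconstant (neither identically 0 nor identically 1). Then there is no local coordinate system in which both ω¹ and ω² have constant coefficients. -/
/-- The 2-form `dλ ∧ dy¹` on `ℝ³` with coordinates `(λ, y¹, y²)`. -/
def omega1 (v w : ℝ × ℝ × ℝ) : ℝ := v.1 * w.2.1 - w.1 * v.2.1

/-- Counterexample to a `k`-presymplectic Darboux theorem: on `ℝ³` with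
coordinates `(λ, y¹, y²)`, take `ω¹ = dλ∧dy¹` and `ω² = (∂f/∂λ) dλ∧dy¹` with
`∂f/∂λ` nonconstant. Then there is no coordinate system `φ` in which both
`ω¹` and `ω²` have constant coefficients `B₁`, `B₂`. -/
theorem no_darboux_for_kpresymplectic (f : ℝ × ℝ → ℝ) (hf : ContDiff ℝ (⊤ : ℕ∞) f)
    (hnc : ¬ ∃ c : ℝ, ∀ x : ℝ × ℝ, fderiv ℝ f x (1, 0) = c) :
    ¬ ∃ (φ : ℝ × ℝ × ℝ → ℝ × ℝ × ℝ)
        (B₁ B₂ : (ℝ × ℝ × ℝ) →ₗ[ℝ] (ℝ × ℝ × ℝ) →ₗ[ℝ] ℝ),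
      ContDiff ℝ (⊤ : ℕ∞) φ ∧ Function.Injective φ ∧
      (∀ q : ℝ × ℝ × ℝ, Function.Bijective (fderiv ℝ φ q)) ∧
      (∀ (q v w : ℝ × ℝ × ℝ),
        omega1 v w = B₁ (fderiv ℝ φ q v) (fderiv ℝ φ q w)) ∧
      (∀ (q v w : ℝ × ℝ × ℝ),
        fderiv ℝ f (q.1, q.2.1) (1, 0) * omega1 v w
          = B₂ (fderiv ℝ φ q v) (fderiv ℝ φ q w)) := by
  rintro ⟨φ, B₁, B₂, -, -, hbij, h1, h2⟩
  apply hnc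
  refine ⟨B₂ (fderiv ℝ φ 0 (1,0,0)) (fderiv ℝ φ 0 (0,1,0)), fun x => ?_⟩
  set q : ℝ × ℝ × ℝ := (x.1, x.2, 0) with hq
  obtain ⟨v, hv⟩ := (hbij q).2 (fderiv ℝ φ 0 (1,0,0))
  obtain ⟨w, hw⟩ := (hbij q).2 (fderiv ℝ φ 0 (0,1,0))
  have h1' := h1 q v w
  have h2' := h2 q v w
  rw [hv, hw] at h1' h2'
  have h0 := h1 0 (1,0,0) (0,1,0)
  have e1 : omega1 (1,0,0) (0,1,0) = 1 := by simp [omega1]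
  rw [e1] at h0
  rw [← h0] at h1'
  have hx : ((q.1, q.2.1) : ℝ × ℝ) = x := by simp [hq]
  rw [hx, h1', mul_one] at h2'
  exact h2'
end

section
/- Let V be a real vector space, η¹,...,η^k linearly independent covectors and ω¹,...,ω^k alternating bilinear forms on V satisfying ∩_{α=1}^k (ker η^α ∩ ker ω^α) = {0} and dim(∩_{α=1}^k ker ω^α) = k. Then there exist unique vectors R_1,...,R_k ∈ V with η^β(R_α) = δ^β_α and ω^β(R_α,·) = 0 for all α, β. -/
/-!
On `W = ⋂ α, ker ω^α` the map `v ↦ (η^α v)_α` is injective, because its kernel is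
`W ∩ ⋂ α, ker η^α = 0`. So `W` is finite-dimensional, and as `dim W = k` the map is an
isomorphism `W ≃ ℝ^k`; the Reeb vectors are the preimages of the standard basis.
-/

open Module Submodule LinearMap

section

variable {K V ι : Type*} [Field K] [AddCommGroup V] [Module K V] [Fintype ι]

theorem bijective_pi_domRestrict_of_inf_iInf_ker_eq_bot {W : Submodule K V}
    {η : ι → Dual K V} (hW : W ⊓ ⨅ i, ker (η i) = ⊥) (hrank : finrank K W = Fintype.card ι) :
    Function.Bijective (pi fun i ↦ (η i).domRestrict W) := by
  have hinj : Function.Injective (pi fun i ↦ (η i).domRestrict W) := by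
    rw [← ker_eq_bot, eq_bot_iff]
    intro w hw
    have hw' : (w : V) ∈ W ⊓ ⨅ i, ker (η i) := by
      simpa [ker_pi, mem_iInf] using hw
    simpa [hW] using hw'
  have : FiniteDimensional K W := .of_injective _ hinj
  exact ⟨hinj, (injective_iff_surjective_of_finrank_eq_finrank (by simp [hrank])).1 hinj⟩

theorem existsUnique_biorthogonal_mem [DecidableEq ι] {W : Submodule K V}
    {η : ι → Dual K V} (hW : W ⊓ ⨅ i, ker (η i) = ⊥) (hrank : finrank K W = Fintype.card ι) :
    ∃! R : ι → V, ∀ i, R i ∈ W ∧ ∀ j, η j (R i) = if i = j then 1 else 0 := by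
  let e := LinearEquiv.ofBijective _ (bijective_pi_domRestrict_of_inf_iInf_ker_eq_bot hW hrank)
  have he : ∀ (w : W) i, e w = Pi.single i 1 ↔ ∀ j, η j w = if i = j then 1 else 0 := by
    intro w i
    simp [e, funext_iff, Pi.single_apply, eq_comm]
  refine ⟨fun i ↦ e.symm (Pi.single i 1),
    fun i ↦ ⟨(e.symm _).2, (he _ i).1 (e.apply_symm_apply _)⟩, fun R hR ↦ funext fun i ↦ ?_⟩
  exact congrArg Subtype.val (e.eq_symm_apply.2 ((he ⟨R i, (hR i).1⟩ i).2 (hR i).2))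

end

theorem linear_kcosymplectic_reeb_general
    (V : Type*) [AddCommGroup V] [Module ℝ V]
    (k : ℕ)
    (η : Fin k → Module.Dual ℝ V)
    (ω : Fin k → V →ₗ[ℝ] Module.Dual ℝ V)
    (h1 : (⨅ α : Fin k, (LinearMap.ker (η α) ⊓ LinearMap.ker (ω α))) = ⊥)
    (h2 : Module.finrank ℝ ↥(⨅ α : Fin k, LinearMap.ker (ω α)) = k) :
    ∃! R : Fin k → V, ∀ α β : Fin k,
      η β (R α) = (if α = β then (1 : ℝ) else 0) ∧ ω β (R α) = 0 := by
  have hW : (⨅ α, ker (ω α)) ⊓ ⨅ α, ker (η α) = ⊥ := by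
    rw [← iInf_inf_eq, ← h1]
    simp_rw [inf_comm]
  simpa [mem_iInf, forall_and, and_comm] using
    existsUnique_biorthogonal_mem hW (h2.trans (Fintype.card_fin k).symm)

/-- Linear version of existence and uniqueness of the Reeb vectors of a
`k`-cosymplectic structure. -/
theorem linear_kcosymplectic_reeb
    (V : Type*) [AddCommGroup V] [Module ℝ V] [FiniteDimensional ℝ V]
    (k : ℕ)
    (η : Fin k → Module.Dual ℝ V) (hη : LinearIndependent ℝ η)
    (ω : Fin k → V →ₗ[ℝ] Module.Dual ℝ V)
    (halt : ∀ (α : Fin k) (v w : V), ω α v w = - ω α w v)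
    (h1 : (⨅ α : Fin k, (LinearMap.ker (η α) ⊓ LinearMap.ker (ω α))) = ⊥)
    (h2 : Module.finrank ℝ ↥(⨅ α : Fin k, LinearMap.ker (ω α)) = k) :
    ∃! R : Fin k → V, ∀ α β : Fin k,
      η β (R α) = (if α = β then (1 : ℝ) else 0) ∧ ω β (R α) = 0 :=
  linear_kcosymplectic_reeb_general V k η ω h1 h2
end
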